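/- Fix a real τ with 0 < τ < 1 and take α = 1/2. For an integer d ≥ 2, a real T > 0 and a real φ ∈ [1, d], define r_d(T, φ) = ( Σ_{k=1}^{⌊φ⌋} (k^{−1/2} − φ^{−1/2})² + Σ_{k=⌊φ⌋+1}^{d} φ^{−1}/(4T²) ) / Σ_{k=1}^{d} k^{−1}. Then, with T_d = (1/2)·d^{τ/2} and φ_d = d^{1−τ}, one has lim_{d→∞} r_d(T_d, φ_d) = 1 − τ. -/
import Mathlib
set_option maxHeartbeats 1000000

open Filter

/-- harmonic sum bounds, lower -/
lemma aux_harm_lower (n : ℕ) : Real.log (n + 1) ≤ ∑ k ∈ Finset.Icc 1 n, (k : ℝ)⁻¹ := by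
  have := log_add_one_le_harmonic n
  rw [harmonic_eq_sum_Icc] at this
  push_cast at this ⊢
  convert this using 2

lemma aux_harm_upper (n : ℕ) : ∑ k ∈ Finset.Icc 1 n, (k : ℝ)⁻¹ ≤ 1 + Real.log n := by
  have := harmonic_le_one_add_log n
  rw [harmonic_eq_sum_Icc] at this
  push_cast at this ⊢
  convert this using 2

/-- telescoping bound on the sum of inverse square roots -/
lemma aux_sqrt_sum (m : ℕ) :
    ∑ k ∈ Finset.Icc 1 m, (k : ℝ) ^ (-(1/2 : ℝ)) ≤ 2 * Real.sqrt m := by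
  induction m with
  | zero => simp
  | succ n ih =>
    rw [Finset.sum_Icc_succ_top (by omega : 1 ≤ n + 1)]
    have hs : (0:ℝ) ≤ Real.sqrt n := Real.sqrt_nonneg _
    have ht : (0:ℝ) < Real.sqrt (n+1) := Real.sqrt_pos.mpr (by positivity)
    have hs2 : Real.sqrt n ^ 2 = (n:ℝ) := Real.sq_sqrt (by positivity)
    have ht2 : Real.sqrt (n+1) ^ 2 = (n:ℝ)+1 := Real.sq_sqrt (by positivity)
    have hst : Real.sqrt n * Real.sqrt (n+1) ≤ (n:ℝ) + 1/2 := by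
      nlinarith [sq_nonneg (Real.sqrt n - Real.sqrt (n+1))]
    have hterm : ((n+1 : ℕ) : ℝ) ^ (-(1/2 : ℝ)) ≤ 2 * Real.sqrt (n+1) - 2 * Real.sqrt n := by
      rw [Real.rpow_neg (by positivity), ← Real.sqrt_eq_rpow]
      rw [inv_le_iff_one_le_mul₀ (by push_cast; exact ht)]
      push_cast
      nlinarith
    push_cast at hterm ⊢
    linarith

/-- limit of a linear fractional expression -/
lemma aux_linfrac (a b c : ℝ) :
    Tendsto (fun x : ℝ => (a * x + b) / (x + c)) atTop (nhds a) := by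
  have h : Tendsto (fun x : ℝ => a + (b - a * c) / (x + c)) atTop (nhds (a + 0)) := by
    exact tendsto_const_nhds.add
      (tendsto_const_nhds.div_atTop (tendsto_atTop_add_const_right _ c tendsto_id))
  rw [add_zero] at h
  refine h.congr' ?_
  filter_upwards [eventually_gt_atTop (|c| + 1)] with x hx
  have hxc : x + c ≠ 0 := by
    have h1 : -|c| ≤ c := neg_abs_le c
    nlinarith
  field_simp
  ring

lemma aux_main (τ : ℝ) (hτ0 : 0 < τ) (hτ1 : τ < 1) (d : ℕ) (hd : 2 ≤ d) :
    ((1-τ) * Real.log d + (-4)) / (Real.log d + 1) ≤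
      ((∑ k ∈ Finset.Icc 1 ⌊(d : ℝ) ^ (1 - τ)⌋₊,
            ((k : ℝ) ^ (-(1/2 : ℝ)) - ((d : ℝ) ^ (1 - τ)) ^ (-(1/2 : ℝ))) ^ 2) +
          ∑ k ∈ Finset.Icc (⌊(d : ℝ) ^ (1 - τ)⌋₊ + 1) d,
            ((d : ℝ) ^ (1 - τ)) ^ (-1 : ℝ) / (4 * ((1/2) * (d : ℝ) ^ (τ/2)) ^ 2)) /
        (∑ k ∈ Finset.Icc 1 d, (k : ℝ) ^ (-1 : ℝ)) ∧
    ((∑ k ∈ Finset.Icc 1 ⌊(d : ℝ) ^ (1 - τ)⌋₊,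
            ((k : ℝ) ^ (-(1/2 : ℝ)) - ((d : ℝ) ^ (1 - τ)) ^ (-(1/2 : ℝ))) ^ 2) +
          ∑ k ∈ Finset.Icc (⌊(d : ℝ) ^ (1 - τ)⌋₊ + 1) d,
            ((d : ℝ) ^ (1 - τ)) ^ (-1 : ℝ) / (4 * ((1/2) * (d : ℝ) ^ (τ/2)) ^ 2)) /
        (∑ k ∈ Finset.Icc 1 d, (k : ℝ) ^ (-1 : ℝ)) ≤
      ((1-τ) * Real.log d + 2) / (Real.log d + 0) := by
  have h1τ : 0 < 1 - τ := by linarith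
  have hd2 : (2:ℝ) ≤ d := by exact_mod_cast hd
  have hd0 : (0:ℝ) < d := by linarith
  have hd1 : (1:ℝ) ≤ d := by linarith
  set φ : ℝ := (d : ℝ) ^ (1 - τ) with hφdef
  set m : ℕ := ⌊φ⌋₊ with hmdef
  set L : ℝ := Real.log d with hLdef
  have hL0 : 0 < L := Real.log_pos (by linarith)
  have hφ0 : 0 < φ := Real.rpow_pos_of_pos hd0 _
  have hφ1 : 1 ≤ φ := by
    calc (1:ℝ) = (d:ℝ) ^ (0:ℝ) := (Real.rpow_zero _).symm
    _ ≤ φ := Real.rpow_le_rpow_of_exponent_le hd1 (by linarith)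
  have hφd : φ ≤ d := by
    calc φ ≤ (d:ℝ) ^ (1:ℝ) := Real.rpow_le_rpow_of_exponent_le hd1 (by linarith)
    _ = d := Real.rpow_one _
  have hm1 : 1 ≤ m := Nat.le_floor (by exact_mod_cast hφ1)
  have hm0 : (0:ℝ) < m := by exact_mod_cast hm1
  have hmφ : (m:ℝ) ≤ φ := Nat.floor_le hφ0.le
  have hφm : φ < m + 1 := Nat.lt_floor_add_one φ
  have hmd : m ≤ d := by exact_mod_cast hmφ.trans hφd
  -- denominator
  set D : ℝ := ∑ k ∈ Finset.Icc 1 d, (k : ℝ) ^ (-1 : ℝ) with hDdef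
  have hDeq : D = ∑ k ∈ Finset.Icc 1 d, (k : ℝ)⁻¹ :=
    Finset.sum_congr rfl fun k _ => Real.rpow_neg_one _
  have hD_low : L ≤ D := by
    rw [hDeq]
    exact (Real.log_le_log hd0 (by linarith)).trans (aux_harm_lower d)
  have hD_up : D ≤ L + 1 := by rw [hDeq]; have := aux_harm_upper d; linarith
  have hD0 : 0 < D := lt_of_lt_of_le hL0 hD_low
  -- second sum
  set S2 : ℝ := ∑ k ∈ Finset.Icc (m + 1) d,
      φ ^ (-1 : ℝ) / (4 * ((1/2) * (d : ℝ) ^ (τ/2)) ^ 2) with hS2def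
  have hterm : φ ^ (-1 : ℝ) / (4 * ((1/2) * (d : ℝ) ^ (τ/2)) ^ 2) = (d:ℝ)⁻¹ := by
    have hsq2 : ((d:ℝ) ^ (τ/2)) ^ 2 = (d:ℝ) ^ τ := by
      rw [sq, ← Real.rpow_add hd0, show τ/2 + τ/2 = τ by ring]
    have h2 : 4 * ((1/2) * (d : ℝ) ^ (τ/2)) ^ 2 = (d:ℝ) ^ τ := by
      rw [mul_pow, hsq2]; ring
    have h1 : φ ^ (-1 : ℝ) = (d:ℝ) ^ ((1-τ) * (-1)) := by
      rw [hφdef]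
      exact (Real.rpow_mul hd0.le _ _).symm
    rw [h1, h2, ← Real.rpow_sub hd0, show (1-τ) * (-1) - τ = -1 by ring, Real.rpow_neg_one]
  have hS2eq : S2 = ((d - m : ℕ) : ℝ) * (d:ℝ)⁻¹ := by
    rw [hS2def, Finset.sum_const, hterm, nsmul_eq_mul, Nat.card_Icc,
      show d + 1 - (m + 1) = d - m by omega]
  have hS20 : 0 ≤ S2 := by rw [hS2eq]; positivity
  have hS21 : S2 ≤ 1 := by
    rw [hS2eq]
    have hcast : ((d - m : ℕ) : ℝ) ≤ (d:ℝ) := by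
      have : (d - m : ℕ) ≤ d := by omega
      exact_mod_cast this
    calc ((d - m : ℕ) : ℝ) * (d:ℝ)⁻¹ ≤ (d:ℝ) * (d:ℝ)⁻¹ := by
          exact mul_le_mul_of_nonneg_right hcast (by positivity)
    _ = 1 := mul_inv_cancel₀ (ne_of_gt hd0)
  -- first sum
  set b : ℝ := φ ^ (-(1/2 : ℝ)) with hbdef
  have hb0 : 0 < b := Real.rpow_pos_of_pos hφ0 _
  set S1 : ℝ := ∑ k ∈ Finset.Icc 1 m, ((k : ℝ) ^ (-(1/2 : ℝ)) - b) ^ 2 with hS1def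
  have hS10 : 0 ≤ S1 := Finset.sum_nonneg fun k _ => sq_nonneg _
  set Hm : ℝ := ∑ k ∈ Finset.Icc 1 m, (k : ℝ)⁻¹ with hHmdef
  have hkfacts : ∀ k ∈ Finset.Icc 1 m, (0:ℝ) < k ∧ (k:ℝ) ≤ φ := by
    intro k hk
    rw [Finset.mem_Icc] at hk
    constructor
    · exact_mod_cast hk.1
    · calc (k:ℝ) ≤ (m:ℝ) := by exact_mod_cast hk.2
      _ ≤ φ := hmφ
  have hS1_up : S1 ≤ Hm := by
    apply Finset.sum_le_sum
    intro k hk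
    obtain ⟨hk0, hkφ⟩ := hkfacts k hk
    have hba : b ≤ (k:ℝ) ^ (-(1/2 : ℝ)) := Real.rpow_le_rpow_of_nonpos hk0 hkφ (by norm_num)
    have haa : (k:ℝ) ^ (-(1/2 : ℝ)) * (k:ℝ) ^ (-(1/2 : ℝ)) = (k:ℝ)⁻¹ := by
      rw [← Real.rpow_add hk0, show (-(1/2 : ℝ)) + (-(1/2 : ℝ)) = -1 by norm_num,
        Real.rpow_neg_one]
    nlinarith [hb0.le]
  have hS1_low : Hm - 4 ≤ S1 := by
    have hpt : ∀ k ∈ Finset.Icc 1 m,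
        (k:ℝ)⁻¹ - 2 * b * (k:ℝ) ^ (-(1/2 : ℝ)) ≤ ((k : ℝ) ^ (-(1/2 : ℝ)) - b) ^ 2 := by
      intro k hk
      obtain ⟨hk0, _⟩ := hkfacts k hk
      have haa : (k:ℝ) ^ (-(1/2 : ℝ)) * (k:ℝ) ^ (-(1/2 : ℝ)) = (k:ℝ)⁻¹ := by
        rw [← Real.rpow_add hk0, show (-(1/2 : ℝ)) + (-(1/2 : ℝ)) = -1 by norm_num,
          Real.rpow_neg_one]
      nlinarith [sq_nonneg b]
    have hsum := Finset.sum_le_sum hpt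
    rw [Finset.sum_sub_distrib, ← Finset.mul_sum] at hsum
    have hbm : 2 * b * (∑ k ∈ Finset.Icc 1 m, (k : ℝ) ^ (-(1/2 : ℝ))) ≤ 4 := by
      have hsq : ∑ k ∈ Finset.Icc 1 m, (k : ℝ) ^ (-(1/2 : ℝ)) ≤ 2 * Real.sqrt m :=
        aux_sqrt_sum m
      have hsqnn : 0 ≤ ∑ k ∈ Finset.Icc 1 m, (k : ℝ) ^ (-(1/2 : ℝ)) :=
        Finset.sum_nonneg fun k hk => (Real.rpow_pos_of_pos
          (Nat.cast_pos.mpr (Finset.mem_Icc.mp hk).1) _).le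
      have hsφ : 0 < Real.sqrt φ := Real.sqrt_pos.mpr hφ0
      have hbval : b = (Real.sqrt φ)⁻¹ := by
        rw [hbdef, Real.rpow_neg hφ0.le, Real.sqrt_eq_rpow]
      have hsqm : Real.sqrt m ≤ Real.sqrt φ := Real.sqrt_le_sqrt hmφ
      have : b * (2 * Real.sqrt m) ≤ 2 := by
        rw [hbval, inv_mul_le_iff₀ hsφ]
        nlinarith
      nlinarith [mul_le_mul_of_nonneg_left hsq (by positivity : (0:ℝ) ≤ 2 * b)]
    linarith
  -- Hm bounds
  have hHm_low : (1-τ) * L ≤ Hm := by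
    have h1 : Real.log φ = (1-τ) * L := Real.log_rpow hd0 _
    have h2 : Real.log φ ≤ Real.log (m + 1) := Real.log_le_log hφ0 (by linarith)
    have h3 := aux_harm_lower m
    rw [← hHmdef] at h3
    linarith
  have hHm_up : Hm ≤ 1 + (1-τ) * L := by
    have h1 : Real.log φ = (1-τ) * L := Real.log_rpow hd0 _
    have h2 : Real.log m ≤ Real.log φ := Real.log_le_log hm0 hmφ
    have h3 := aux_harm_upper m
    rw [← hHmdef] at h3
    linarith
  -- numerator bounds
  have hNum_low : (1-τ) * L - 4 ≤ S1 + S2 := by linarith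
  have hNum_up : S1 + S2 ≤ (1-τ) * L + 2 := by linarith
  have hNum0 : 0 ≤ S1 + S2 := by linarith
  constructor
  · rw [div_le_div_iff₀ (by linarith) hD0]
    nlinarith [mul_le_mul_of_nonneg_right hNum_low hD0.le,
      mul_le_mul_of_nonneg_left hD_up hNum0]
  · rw [div_le_div_iff₀ hD0 (by linarith)]
    nlinarith [mul_le_mul_of_nonneg_right hNum_up hD0.le,
      mul_le_mul_of_nonneg_left hD_low hNum0]

theorem stmt14 (τ : ℝ) (hτ0 : 0 < τ) (hτ1 : τ < 1) :
    Tendsto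
      (fun d : ℕ =>
        ((∑ k ∈ Finset.Icc 1 ⌊(d : ℝ) ^ (1 - τ)⌋₊,
            ((k : ℝ) ^ (-(1/2 : ℝ)) - ((d : ℝ) ^ (1 - τ)) ^ (-(1/2 : ℝ))) ^ 2) +
          ∑ k ∈ Finset.Icc (⌊(d : ℝ) ^ (1 - τ)⌋₊ + 1) d,
            ((d : ℝ) ^ (1 - τ)) ^ (-1 : ℝ) / (4 * ((1/2) * (d : ℝ) ^ (τ/2)) ^ 2)) /
        (∑ k ∈ Finset.Icc 1 d, (k : ℝ) ^ (-1 : ℝ)))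
      atTop (nhds (1 - τ)) := by
  have h1τ : 0 < 1 - τ := by linarith
  have hlog : Tendsto (fun d : ℕ => Real.log d) atTop atTop :=
    Real.tendsto_log_atTop.comp tendsto_natCast_atTop_atTop
  have hlow : Tendsto (fun d : ℕ => ((1-τ) * Real.log d + (-4)) / (Real.log d + 1))
      atTop (nhds (1-τ)) := (aux_linfrac (1-τ) (-4) 1).comp hlog
  have hupp : Tendsto (fun d : ℕ => ((1-τ) * Real.log d + 2) / (Real.log d + 0))
      atTop (nhds (1-τ)) := (aux_linfrac (1-τ) 2 0).comp hlog
  refine tendsto_of_tendsto_of_tendsto_of_le_of_le' hlow hupp ?_ ?_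
  · filter_upwards [eventually_ge_atTop 2] with d hd
    exact (aux_main τ hτ0 hτ1 d hd).1
  · filter_upwards [eventually_ge_atTop 2] with d hd
    exact (aux_main τ hτ0 hτ1 d hd).2
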